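/- arXiv:2105.10531 — 3 statements merged into one kernel-verified Lean document; each statement's English description precedes it below -/
import Mathlib

section
/- Let 𝒜 be an abelian category and (𝒟, ℰ) a cotorsion pair with enough injectives. If every object of 𝒜 is a quotient of an object in 𝒟, then (𝒟, ℰ) is complete, i.e. it also has enough projectives. Dually, if (𝒟, ℰ) has enough projectives and every object of 𝒜 is a subobject of an object in ℰ, then (𝒟, ℰ) is complete. -/
open CategoryTheory CategoryTheory.Limits CategoryTheory.Abelian

universe w v u

/-- `(𝒟, ℰ)` is a cotorsion pair on the abelian category `C`. -/
def IsCotorsionPair {C : Type u} [Category.{v} C] [Abelian C] [HasExt.{w} C]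
    (𝒟 ℰ : Set C) : Prop :=
  (∀ X : C, X ∈ 𝒟 ↔ ∀ Y ∈ ℰ, Subsingleton (Ext X Y 1)) ∧
  (∀ Y : C, Y ∈ ℰ ↔ ∀ X ∈ 𝒟, Subsingleton (Ext X Y 1))

/-- The cotorsion pair `(𝒟, ℰ)` has enough injectives: every object `X` fits in a short
exact sequence `0 → X → E → D → 0` with `E ∈ ℰ` and `D ∈ 𝒟`. -/
def CPHasEnoughInjectives {C : Type u} [Category.{v} C] [Abelian C]
    (𝒟 ℰ : Set C) : Prop :=
  ∀ X : C, ∃ (E D : C) (i : X ⟶ E) (p : E ⟶ D) (w : i ≫ p = 0),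
    (ShortComplex.mk i p w).ShortExact ∧ E ∈ ℰ ∧ D ∈ 𝒟

/-- The cotorsion pair `(𝒟, ℰ)` has enough projectives: every object `X` fits in a short
exact sequence `0 → E → D → X → 0` with `E ∈ ℰ` and `D ∈ 𝒟`. -/
def CPHasEnoughProjectives {C : Type u} [Category.{v} C] [Abelian C]
    (𝒟 ℰ : Set C) : Prop :=
  ∀ X : C, ∃ (E D : C) (i : E ⟶ D) (p : D ⟶ X) (w : i ≫ p = 0),
    (ShortComplex.mk i p w).ShortExact ∧ E ∈ ℰ ∧ D ∈ 𝒟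

/-- The cotorsion pair `(𝒟, ℰ)` is complete: it has enough injectives and enough
projectives. -/
def CPIsComplete {C : Type u} [Category.{v} C] [Abelian C] (𝒟 ℰ : Set C) : Prop :=
  CPHasEnoughInjectives 𝒟 ℰ ∧ CPHasEnoughProjectives 𝒟 ℰ

/-!
Salce's trick. Given `X`, choose an epimorphism `D ↠ X` with `D ∈ 𝒟` and kernel `K`, and a
special `ℰ`-preenvelope `0 → K → E → D' → 0`. Pushing out `0 → K → D → X → 0` along `K → E`
gives `0 → E → P → X → 0`, and pushing out the preenvelope along `K → D` shows that `P` is an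
extension of `D'` by `D`, hence lies in `𝒟`, because `𝒟 = ⊥ℰ` is closed under extensions.
The second statement is the dual argument with pullbacks.
-/

namespace CategoryTheory.ShortComplex.ShortExact

variable {C : Type u} [Category.{v} C] [Abelian C]

lemma of_isPushout {S : ShortComplex C} (hS : S.ShortExact)
    {M P : C} (u : S.X₁ ⟶ M) {a : S.X₂ ⟶ P} {b : M ⟶ P} (sq : IsPushout S.f u a b) :
    (ShortComplex.mk b (sq.desc S.g 0 (by simp)) (sq.inr_desc _ _ _)).ShortExact := by
  have := hS.mono_f
  have := hS.epi_g
  set π : P ⟶ S.X₃ := sq.desc S.g 0 (by simp)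
  have ha : a ≫ π = S.g := sq.inl_desc _ _ _
  have hb : b ≫ π = 0 := sq.inr_desc _ _ _
  have : Epi π := by
    have : Epi (a ≫ π) := by rw [ha]; infer_instance
    exact epi_of_epi a π
  have : Mono b := by
    rw [← sq.inr_isoPushout_inv]
    infer_instance
  -- a map `t` killing `b` factors through `S.g` because `a ≫ t` kills `S.f`
  refine .mk' (ShortComplex.exact_of_g_is_cokernel _ <|
    CokernelCofork.IsColimit.ofπ' π hb fun t ht => ?_) ‹_› ‹_›
  obtain ⟨l, hl⟩ := CokernelCofork.IsColimit.desc' hS.gIsCokernel (a ≫ t)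
    (by rw [← Category.assoc, sq.w, Category.assoc, ht, comp_zero])
  exact ⟨l, sq.hom_ext (by rw [← Category.assoc, ha]; exact hl)
    (by rw [← Category.assoc, hb, zero_comp, ht])⟩

lemma of_isPullback {S : ShortComplex C} (hS : S.ShortExact)
    {M P : C} (u : M ⟶ S.X₃) {a : P ⟶ S.X₂} {b : P ⟶ M} (sq : IsPullback a b S.g u) :
    (ShortComplex.mk (sq.lift S.f 0 (by simp)) b (sq.lift_snd _ _ _)).ShortExact := by
  have := hS.mono_f
  have := hS.epi_g
  set ι : S.X₁ ⟶ P := sq.lift S.f 0 (by simp)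
  have ha : ι ≫ a = S.f := sq.lift_fst _ _ _
  have hb : ι ≫ b = 0 := sq.lift_snd _ _ _
  have : Mono ι := by
    have : Mono (ι ≫ a) := by rw [ha]; infer_instance
    exact mono_of_mono ι a
  have : Epi b := by
    rw [← sq.isoPullback_hom_snd]
    infer_instance
  refine .mk' (ShortComplex.exact_of_f_is_kernel _ <|
    KernelFork.IsLimit.ofι' ι hb fun t ht => ?_) ‹_› ‹_›
  obtain ⟨l, hl⟩ := KernelFork.IsLimit.lift' hS.fIsKernel (t ≫ a)
    (by rw [Category.assoc, sq.w, ← Category.assoc, ht, zero_comp])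
  exact ⟨l, sq.hom_ext (by rw [Category.assoc, ha]; exact hl)
    (by rw [Category.assoc, hb, comp_zero, ht])⟩

lemma subsingleton_ext_X₂_left [HasExt.{w} C] {S : ShortComplex C} (hS : S.ShortExact)
    (Y : C) (n : ℕ) [Subsingleton (Ext S.X₁ Y n)] [Subsingleton (Ext S.X₃ Y n)] :
    Subsingleton (Ext S.X₂ Y n) := by
  refine subsingleton_of_forall_eq 0 fun x => ?_
  obtain ⟨x₃, rfl⟩ := Ext.contravariant_sequence_exact₂ hS Y x (Subsingleton.elim _ _)
  rw [Subsingleton.elim x₃ 0, Ext.comp_zero]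

lemma subsingleton_ext_X₂_right [HasExt.{w} C] {S : ShortComplex C} (hS : S.ShortExact)
    (X : C) (n : ℕ) [Subsingleton (Ext X S.X₁ n)] [Subsingleton (Ext X S.X₃ n)] :
    Subsingleton (Ext X S.X₂ n) := by
  refine subsingleton_of_forall_eq 0 fun x => ?_
  obtain ⟨x₁, rfl⟩ := Ext.covariant_sequence_exact₂ X hS x (Subsingleton.elim _ _)
  rw [Subsingleton.elim x₁ 0, Ext.zero_comp]

end CategoryTheory.ShortComplex.ShortExact

namespace IsCotorsionPair

variable {C : Type u} [Category.{v} C] [Abelian C] [HasExt.{w} C] {𝒟 ℰ : Set C}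

lemma mem_left_of_shortExact (h : IsCotorsionPair 𝒟 ℰ) {S : ShortComplex C}
    (hS : S.ShortExact) (h₁ : S.X₁ ∈ 𝒟) (h₃ : S.X₃ ∈ 𝒟) : S.X₂ ∈ 𝒟 :=
  (h.1 _).2 fun Y hY =>
    have := (h.1 _).1 h₁ Y hY
    have := (h.1 _).1 h₃ Y hY
    hS.subsingleton_ext_X₂_left Y 1

lemma mem_right_of_shortExact (h : IsCotorsionPair 𝒟 ℰ) {S : ShortComplex C}
    (hS : S.ShortExact) (h₁ : S.X₁ ∈ ℰ) (h₃ : S.X₃ ∈ ℰ) : S.X₂ ∈ ℰ :=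
  (h.2 _).2 fun X hX =>
    have := (h.2 _).1 h₁ X hX
    have := (h.2 _).1 h₃ X hX
    hS.subsingleton_ext_X₂_right X 1

lemma cpHasEnoughProjectives (h : IsCotorsionPair 𝒟 ℰ) (hInj : CPHasEnoughInjectives 𝒟 ℰ)
    (hQuot : ∀ X : C, ∃ D ∈ 𝒟, ∃ p : D ⟶ X, Epi p) : CPHasEnoughProjectives 𝒟 ℰ := by
  intro X
  obtain ⟨D, hD, p, hp⟩ := hQuot X
  have hK : (ShortComplex.mk _ _ (kernel.condition p)).ShortExact :=
    { exact := ShortComplex.exact_kernel p }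
  obtain ⟨E, D', i, _, _, hS, hE, hD'⟩ := hInj (kernel p)
  have sq := IsPushout.of_hasPushout (kernel.ι p) i
  exact ⟨E, pushout (kernel.ι p) i, pushout.inr _ _, _, _, hK.of_isPushout i sq, hE,
    h.mem_left_of_shortExact (hS.of_isPushout (kernel.ι p) sq.flip) hD hD'⟩

lemma cpHasEnoughInjectives (h : IsCotorsionPair 𝒟 ℰ) (hProj : CPHasEnoughProjectives 𝒟 ℰ)
    (hSub : ∀ X : C, ∃ E ∈ ℰ, ∃ i : X ⟶ E, Mono i) : CPHasEnoughInjectives 𝒟 ℰ := by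
  intro X
  obtain ⟨E, hE, i, hi⟩ := hSub X
  have hQ : (ShortComplex.mk _ _ (cokernel.condition i)).ShortExact :=
    { exact := ShortComplex.exact_cokernel i }
  obtain ⟨E', D, _, p, _, hS, hE', hD⟩ := hProj (cokernel i)
  have sq := IsPullback.of_hasPullback (cokernel.π i) p
  exact ⟨pullback (cokernel.π i) p, D, _, pullback.snd _ _, _, hQ.of_isPullback p sq,
    h.mem_right_of_shortExact (hS.of_isPullback (cokernel.π i) sq.flip) hE' hE, hD⟩

end IsCotorsionPair

/-- If a cotorsion pair has enough injectives and every object is a quotient of an object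
of `𝒟`, then it is complete; dually with enough projectives and subobjects of objects
of `ℰ`. -/
theorem cotorsionPair_complete_of_enough_of_one_side
    {C : Type u} [Category.{v} C] [Abelian C] [HasExt.{w} C]
    (𝒟 ℰ : Set C) (h : IsCotorsionPair 𝒟 ℰ) :
    (CPHasEnoughInjectives 𝒟 ℰ →
      (∀ X : C, ∃ D ∈ 𝒟, ∃ p : D ⟶ X, Epi p) → CPIsComplete 𝒟 ℰ) ∧
    (CPHasEnoughProjectives 𝒟 ℰ →
      (∀ X : C, ∃ E ∈ ℰ, ∃ i : X ⟶ E, Mono i) → CPIsComplete 𝒟 ℰ) :=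
  ⟨fun hInj hQuot => ⟨hInj, h.cpHasEnoughProjectives hInj hQuot⟩,
    fun hProj hSub => ⟨h.cpHasEnoughInjectives hProj hSub, hProj⟩⟩
end

section
/- Let (𝒟, ℰ) be a cotorsion pair on an abelian category 𝒜. (1) If 𝒟 is resolving and each object of 𝒜 is a quotient of an object in 𝒟, then Ext²(D, E) = 0 for all D ∈ 𝒟 and E ∈ ℰ. (2) If ℰ is coresolving and each object of 𝒜 is a subobject of an object in ℰ, then Ext²(D, E) = 0 for all D ∈ 𝒟 and E ∈ ℰ. -/
/-!
Every class in `Ext^{n+1}(X, Y)` is effaceable: it dies after precomposition with some epimorphism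
`T ↠ X`, namely the cycles `T = Z⁰(K)` of a complex `K` in a roof `X ← K → Y[n+1]` representing
it (the composite `Z⁰(K) → K → Y[n+1]` vanishes already on complexes, as `Y[n+1]` is zero in
degree `0`); dually it dies after postcomposition with some monomorphism.
When `𝒟` is resolving and generating, the epimorphism can be taken of the form `P ↠ D` with
`P ∈ 𝒟`, whose kernel `K` lies in `𝒟`, so by the long exact sequence the class comes from
`Ext^n(K, E)`. By induction on `n`, starting from `Ext¹(𝒟, ℰ) = 0`, every `Ext^{n+1}(D, E)`
vanishes. The coresolving case is dual.
-/

open CategoryTheory CategoryTheory.Limits CategoryTheory.Abelian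

universe w v u

/-- A class of objects is resolving if it is closed under kernels of epimorphisms. -/
def IsResolving {C : Type u} [Category.{v} C] [Abelian C] (𝒟 : Set C) : Prop :=
  ∀ S : ShortComplex C, S.ShortExact → S.X₂ ∈ 𝒟 → S.X₃ ∈ 𝒟 → S.X₁ ∈ 𝒟

/-- A class of objects is coresolving if it is closed under cokernels of monomorphisms. -/
def IsCoresolving {C : Type u} [Category.{v} C] [Abelian C] (ℰ : Set C) : Prop :=
  ∀ S : ShortComplex C, S.ShortExact → S.X₁ ∈ ℰ → S.X₂ ∈ ℰ → S.X₃ ∈ ℰ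

namespace HomologicalComplex

variable {C : Type u} [Category.{v} C] [Abelian C] {ι : Type*} [DecidableEq ι]
  {c : ComplexShape ι} {j : ι}

lemma exists_epi_single_map_eq_comp {K : HomologicalComplex C c} {X : C}
    (s : K ⟶ (single C c j).obj X) [QuasiIsoAt s j] :
    ∃ (T : C) (q : T ⟶ X) (u : (single C c j).obj T ⟶ K),
      Epi q ∧ u ≫ s = (single C c j).map q := by
  refine ⟨K.cycles j, cyclesMap s j ≫ (singleObjCyclesSelfIso c j X).hom,
    mkHomFromSingle (K.iCycles j) (fun k _ => K.iCycles_d j k), ?_, ?_⟩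
  · rw [← homologyπ_singleObjHomologySelfIso_hom, ← homologyπ_naturality_assoc]
    infer_instance
  · apply from_single_hom_ext
    simp [singleObjCyclesSelfIso_hom, single_map_f_self]

lemma exists_mono_single_map_eq_comp {L : HomologicalComplex C c} {Y : C}
    (s : (single C c j).obj Y ⟶ L) [QuasiIsoAt s j] :
    ∃ (T : C) (i : Y ⟶ T) (v : L ⟶ (single C c j).obj T),
      Mono i ∧ s ≫ v = (single C c j).map i := by
  refine ⟨L.opcycles j, (singleObjOpcyclesSelfIso c j Y).hom ≫ opcyclesMap s j,
    mkHomToSingle (L.pOpcycles j) (fun k _ => L.d_pOpcycles k j), ?_, ?_⟩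
  · rw [← singleObjHomologySelfIso_inv_homologyι, Category.assoc, ← homologyι_naturality]
    infer_instance
  · apply to_single_hom_ext
    simp [singleObjOpcyclesSelfIso_hom, single_map_f_self]

end HomologicalComplex

open DerivedCategory

namespace CategoryTheory.Abelian.Ext

variable {C : Type u} [Category.{v} C] [Abelian C] [HasExt.{w} C]

lemma exists_epi_mk₀_comp_eq_zero {X Y : C} {n : ℕ} (ξ : Ext X Y (n + 1)) :
    ∃ (T : C) (q : T ⟶ X), Epi q ∧ (mk₀ q).comp ξ (zero_add _) = 0 := by
  let := HasDerivedCategory.standard C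
  let e := (singleFunctors C).shiftIso ((n + 1 : ℕ) : ℤ) (-((n + 1 : ℕ) : ℤ)) 0 (by omega)
  let f : Q.obj ((HomologicalComplex.single C (ComplexShape.up ℤ) 0).obj X) ⟶
      Q.obj ((HomologicalComplex.single C _ (-((n + 1 : ℕ) : ℤ))).obj Y) := ξ.hom ≫ e.hom.app Y
  obtain ⟨K, s, _, g, hg⟩ := right_fac f
  have : QuasiIso s := (isIso_Q_map_iff_quasiIso _ s).mp ‹_›
  obtain ⟨T, q, u, hq, hu⟩ := HomologicalComplex.exists_epi_single_map_eq_comp s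
  have hug : u ≫ g = 0 := by
    apply HomologicalComplex.from_single_hom_ext
    exact (HomologicalComplex.isZero_single_obj_X _ _ _ _ (by omega)).eq_of_tgt _ _
  have hqf : Q.map ((HomologicalComplex.single C _ 0).map q) ≫ f = 0 := by
    rw [hg, ← hu, Q.map_comp, Category.assoc, IsIso.hom_inv_id_assoc, ← Q.map_comp, hug,
      Q.map_zero]
  refine ⟨T, q, hq, Ext.ext ?_⟩
  rw [← singleFunctor_map_comp_hom, zero_hom, ← cancel_mono (e.hom.app Y), Limits.zero_comp,
    Category.assoc]
  exact hqf

lemma exists_mono_comp_mk₀_eq_zero {X Y : C} {n : ℕ} (ξ : Ext X Y (n + 1)) :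
    ∃ (T : C) (i : Y ⟶ T), Mono i ∧ ξ.comp (mk₀ i) (add_zero _) = 0 := by
  let := HasDerivedCategory.standard C
  let e := (singleFunctors C).shiftIso ((n + 1 : ℕ) : ℤ) (-((n + 1 : ℕ) : ℤ)) 0 (by omega)
  let f : Q.obj ((HomologicalComplex.single C (ComplexShape.up ℤ) 0).obj X) ⟶
      Q.obj ((HomologicalComplex.single C _ (-((n + 1 : ℕ) : ℤ))).obj Y) := ξ.hom ≫ e.hom.app Y
  obtain ⟨L, g, s, _, hg⟩ := left_fac f
  have : QuasiIso s := (isIso_Q_map_iff_quasiIso _ s).mp ‹_›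
  obtain ⟨T, i, v, hi, hv⟩ := HomologicalComplex.exists_mono_single_map_eq_comp s
  have hgv : g ≫ v = 0 := by
    apply HomologicalComplex.to_single_hom_ext
    exact (HomologicalComplex.isZero_single_obj_X _ _ _ _ (by omega)).eq_of_src _ _
  have hfi : f ≫ Q.map ((HomologicalComplex.single C _ _).map i) = 0 := by
    rw [hg, ← hv, Q.map_comp, Category.assoc, IsIso.inv_hom_id_assoc, ← Q.map_comp, hgv,
      Q.map_zero]
  refine ⟨T, i, hi, Ext.ext ?_⟩
  rw [comp_hom, mk₀_hom, ShiftedHom.comp_mk₀, zero_hom, ← cancel_mono (e.hom.app T),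
    Limits.zero_comp, Category.assoc]
  rw [← Functor.comp_map, e.hom.naturality, ← Category.assoc]
  exact hfi

lemma eq_zero_of_mk₀_comp_eq_zero {S : ShortComplex C} (hS : S.ShortExact) {Y : C} {n : ℕ}
    [Subsingleton (Ext S.X₁ Y n)] (ξ : Ext S.X₃ Y (n + 1))
    (h : (mk₀ S.g).comp ξ (zero_add _) = 0) : ξ = 0 := by
  obtain ⟨x₁, rfl⟩ := contravariant_sequence_exact₃ hS Y ξ h (add_comm 1 n)
  rw [Subsingleton.elim x₁ 0, comp_zero]

lemma eq_zero_of_comp_mk₀_eq_zero {S : ShortComplex C} (hS : S.ShortExact) {X : C} {n : ℕ}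
    [Subsingleton (Ext X S.X₃ n)] (ξ : Ext X S.X₁ (n + 1))
    (h : ξ.comp (mk₀ S.f) (add_zero _) = 0) : ξ = 0 := by
  obtain ⟨x₃, rfl⟩ := covariant_sequence_exact₁ X hS ξ h rfl
  rw [Subsingleton.elim x₃ 0, zero_comp]

lemma exists_epi_mem_mk₀_comp_eq_zero {𝒟 : Set C} (h𝒟 : ∀ X : C, ∃ D ∈ 𝒟, ∃ p : D ⟶ X, Epi p)
    {X Y : C} {n : ℕ} (ξ : Ext X Y (n + 1)) :
    ∃ P ∈ 𝒟, ∃ π : P ⟶ X, Epi π ∧ (mk₀ π).comp ξ (zero_add _) = 0 := by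
  obtain ⟨T, q, _, hqξ⟩ := ξ.exists_epi_mk₀_comp_eq_zero
  obtain ⟨P, hP, p, _⟩ := h𝒟 T
  refine ⟨P, hP, p ≫ q, epi_comp p q, ?_⟩
  rw [← mk₀_comp_mk₀, comp_assoc_of_second_deg_zero, hqξ, comp_zero]

lemma exists_mono_mem_comp_mk₀_eq_zero {ℰ : Set C} (hℰ : ∀ X : C, ∃ E ∈ ℰ, ∃ i : X ⟶ E, Mono i)
    {X Y : C} {n : ℕ} (ξ : Ext X Y (n + 1)) :
    ∃ I ∈ ℰ, ∃ i : Y ⟶ I, Mono i ∧ ξ.comp (mk₀ i) (add_zero _) = 0 := by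
  obtain ⟨T, j, _, hξj⟩ := ξ.exists_mono_comp_mk₀_eq_zero
  obtain ⟨I, hI, k, _⟩ := hℰ T
  refine ⟨I, hI, j ≫ k, mono_comp j k, ?_⟩
  rw [← mk₀_comp_mk₀, ← comp_assoc_of_second_deg_zero _ _ _ (add_zero _), hξj, zero_comp]

end CategoryTheory.Abelian.Ext

namespace IsCotorsionPair

variable {C : Type u} [Category.{v} C] [Abelian C] [HasExt.{w} C] {𝒟 ℰ : Set C}

theorem subsingleton_ext_succ_of_isResolving (h : IsCotorsionPair 𝒟 ℰ) (h𝒟 : IsResolving 𝒟)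
    (hgen : ∀ X : C, ∃ D ∈ 𝒟, ∃ p : D ⟶ X, Epi p) (n : ℕ) {D E : C} (hD : D ∈ 𝒟)
    (hE : E ∈ ℰ) : Subsingleton (Ext D E (n + 1)) := by
  induction n generalizing D with
  | zero => exact (h.1 D).mp hD E hE
  | succ n ih =>
    refine subsingleton_of_forall_eq 0 fun ξ => ?_
    obtain ⟨P, hP, π, _, hπξ⟩ := Ext.exists_epi_mem_mk₀_comp_eq_zero hgen ξ
    let S := ShortComplex.mk _ _ (kernel.condition π)
    have hS : S.ShortExact := { exact := ShortComplex.exact_kernel π }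
    have := ih (h𝒟 S hS hP hD)
    exact Ext.eq_zero_of_mk₀_comp_eq_zero hS ξ hπξ

theorem subsingleton_ext_succ_of_isCoresolving (h : IsCotorsionPair 𝒟 ℰ)
    (hℰ : IsCoresolving ℰ) (hcogen : ∀ X : C, ∃ E ∈ ℰ, ∃ i : X ⟶ E, Mono i) (n : ℕ) {D E : C}
    (hD : D ∈ 𝒟) (hE : E ∈ ℰ) : Subsingleton (Ext D E (n + 1)) := by
  induction n generalizing E with
  | zero => exact (h.2 E).mp hE D hD
  | succ n ih =>
    refine subsingleton_of_forall_eq 0 fun ξ => ?_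
    obtain ⟨I, hI, i, _, hξi⟩ := Ext.exists_mono_mem_comp_mk₀_eq_zero hcogen ξ
    let S := ShortComplex.mk _ _ (cokernel.condition i)
    have hS : S.ShortExact := { exact := ShortComplex.exact_cokernel i }
    have := ih (hℰ S hS hE hI)
    exact Ext.eq_zero_of_comp_mk₀_eq_zero hS ξ hξi

end IsCotorsionPair

/-- (1) If `𝒟` is resolving and every object is a quotient of an object of `𝒟`, then
`Ext²(D, E) = 0` for all `D ∈ 𝒟`, `E ∈ ℰ`. (2) If `ℰ` is coresolving and every object is
a subobject of an object of `ℰ`, then `Ext²(D, E) = 0` for all `D ∈ 𝒟`, `E ∈ ℰ`. -/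
theorem ext_two_vanishes_of_resolving_or_coresolving
    {C : Type u} [Category.{v} C] [Abelian C] [HasExt.{w} C]
    (𝒟 ℰ : Set C) (h : IsCotorsionPair 𝒟 ℰ) :
    (IsResolving 𝒟 → (∀ X : C, ∃ D ∈ 𝒟, ∃ p : D ⟶ X, Epi p) →
      ∀ D ∈ 𝒟, ∀ E ∈ ℰ, Subsingleton (Ext D E 2)) ∧
    (IsCoresolving ℰ → (∀ X : C, ∃ E ∈ ℰ, ∃ i : X ⟶ E, Mono i) →
      ∀ D ∈ 𝒟, ∀ E ∈ ℰ, Subsingleton (Ext D E 2)) :=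
  ⟨fun h𝒟 hgen _ hD _ hE => h.subsingleton_ext_succ_of_isResolving h𝒟 hgen 1 hD hE,
    fun hℰ hcogen _ hD _ hE => h.subsingleton_ext_succ_of_isCoresolving hℰ hcogen 1 hD hE⟩
end

section
/- (Two-variable case of the cokernel formula for the pushout product.) Let F : 𝒜₁ × 𝒜₂ → 𝒜₀ be an additive functor between abelian categories that is right exact in each variable. Let f₁ : A₁ → B₁ in 𝒜₁ have cokernel C₁ and f₂ : A₂ → B₂ in 𝒜₂ have cokernel C₂. Then the cokernel of the pushout product □_F(f₁, f₂) : F(B₁, A₂) ⊔_{F(A₁, A₂)} F(A₁, B₂) → F(B₁, B₂) is isomorphic to F(C₁, C₂). -/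
/-!
A morphism out of `F(B₁, B₂)` kills the pushout product exactly when it kills both
`F(f₁, B₂)` and `F(B₁, f₂)`, so the cokernel can be taken in two steps. Right exactness in the
first variable makes `F(π₁, B₂) : F(B₁, B₂) → F(C₁, B₂)`, with `π₁ : B₁ → C₁` the cokernel
projection, a cokernel of `F(f₁, B₂)`. By naturality, `F(B₁, f₂)` followed by it equals
`F(C₁, f₂)` precomposed with the epimorphism `F(π₁, A₂)`, and right exactness in the second
variable makes `F(C₁, π₂)` its cokernel.
-/

open CategoryTheory CategoryTheory.Limits

universe v₀ v₁ v₂ u₀ u₁ u₂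

namespace CategoryTheory.Limits

variable {C : Type*} [Category C] [HasZeroMorphisms C]

lemma pushout.desc_comp_eq_zero_iff {W X Y Z T : C} {f : W ⟶ X} {g : W ⟶ Y} [HasPushout f g]
    (h : X ⟶ Z) (k : Y ⟶ Z) (w : f ≫ h = g ≫ k) (φ : Z ⟶ T) :
    pushout.desc h k w ≫ φ = 0 ↔ h ≫ φ = 0 ∧ k ≫ φ = 0 := by
  constructor
  · intro hφ
    exact ⟨by rw [← pushout.inl_desc_assoc h k w, hφ, comp_zero],
      by rw [← pushout.inr_desc_assoc h k w, hφ, comp_zero]⟩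
  · rintro ⟨hh, hk⟩
    exact pushout.hom_ext (by rw [pushout.inl_desc_assoc, hh, comp_zero])
      (by rw [pushout.inr_desc_assoc, hk, comp_zero])

noncomputable def isCokernelPushoutDesc {W X Y Z Q₁ Q : C} {f : W ⟶ X} {g : W ⟶ Y}
    [HasPushout f g] {h : X ⟶ Z} {k : Y ⟶ Z} (w : f ≫ h = g ≫ k) {p₁ : Z ⟶ Q₁} {p₂ : Q₁ ⟶ Q}
    {hp₁ : h ≫ p₁ = 0} {hp₂ : (k ≫ p₁) ≫ p₂ = 0}
    (c₁ : IsColimit (CokernelCofork.ofπ p₁ hp₁)) (c₂ : IsColimit (CokernelCofork.ofπ p₂ hp₂)) :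
    IsColimit (CokernelCofork.ofπ (p₁ ≫ p₂) ((pushout.desc_comp_eq_zero_iff h k w _).2
      ⟨by rw [reassoc_of% hp₁, zero_comp], by rw [← Category.assoc, hp₂]⟩)) :=
  have : Epi p₁ := epi_of_isColimit_cofork c₁
  have : Epi p₂ := epi_of_isColimit_cofork c₂
  CokernelCofork.IsColimit.ofπ' _ _ fun φ hφ =>
    have ⟨hh, hk⟩ := (pushout.desc_comp_eq_zero_iff h k w φ).1 hφ
    let l₁ := CokernelCofork.IsColimit.desc' c₁ φ hh
    have hl₁ : p₁ ≫ l₁.1 = φ := l₁.2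
    let l₂ := CokernelCofork.IsColimit.desc' c₂ l₁.1 (by rw [Category.assoc, hl₁, hk])
    have hl₂ : p₂ ≫ l₂.1 = l₁.1 := l₂.2
    ⟨l₂.1, by rw [Category.assoc, hl₂, hl₁]⟩

end CategoryTheory.Limits

section Bifunctor

variable {C₀ C₁ C₂ : Type*} [Category C₀] [Category C₁] [Category C₂]
  [HasZeroMorphisms C₀] [HasZeroMorphisms C₁] [HasZeroMorphisms C₂] (F : C₁ ⥤ C₂ ⥤ C₀)
  {A₁ B₁ : C₁} {A₂ B₂ : C₂} (f₁ : A₁ ⟶ B₁) (f₂ : A₂ ⟶ B₂) [HasCokernel f₁] [HasCokernel f₂]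

noncomputable def isCokernelMapAppCokernelπ [(F.flip.obj B₂).PreservesZeroMorphisms]
    [PreservesColimit (parallelPair f₁ 0) (F.flip.obj B₂)] :
    IsColimit (CokernelCofork.ofπ ((F.map (cokernel.π f₁)).app B₂)
      (by
        rw [← NatTrans.comp_app, ← F.map_comp, cokernel.condition]
        exact (F.flip.obj B₂).map_zero _ _) : CokernelCofork ((F.map f₁).app B₂)) :=
  isColimitOfHasCokernelOfPreservesColimit (F.flip.obj B₂) f₁

noncomputable def isCokernelPushoutProduct
    [∀ X₁, (F.obj X₁).PreservesZeroMorphisms] [∀ X₂, (F.flip.obj X₂).PreservesZeroMorphisms]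
    [∀ X₁, PreservesColimitsOfShape WalkingParallelPair (F.obj X₁)]
    [∀ X₂, PreservesColimitsOfShape WalkingParallelPair (F.flip.obj X₂)]
    [HasPushout ((F.obj A₁).map f₂) ((F.map f₁).app A₂)] :
    IsColimit (CokernelCofork.ofπ
      ((F.map (cokernel.π f₁)).app B₂ ≫ (F.obj (cokernel f₁)).map (cokernel.π f₂))
      (by
        rw [pushout.desc_comp_eq_zero_iff, ← NatTrans.comp_app_assoc, ← F.map_comp,
          NatTrans.naturality_assoc, ← Functor.map_comp, cokernel.condition, cokernel.condition]
        exact ⟨by rw [show (F.map 0).app B₂ = 0 from (F.flip.obj B₂).map_zero _ _, zero_comp],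
          by rw [Functor.map_zero, comp_zero]⟩) :
        CokernelCofork (pushout.desc ((F.map f₁).app B₂) ((F.obj B₁).map f₂)
          ((F.map f₁).naturality f₂))) :=
  have : Epi ((F.map (cokernel.π f₁)).app A₂) :=
    epi_of_isColimit_cofork (isCokernelMapAppCokernelπ F f₁)
  isCokernelPushoutDesc _ (isCokernelMapAppCokernelπ F f₁)
    (isCokernelEpiComp (isColimitOfHasCokernelOfPreservesColimit (F.obj (cokernel f₁)) f₂)
      ((F.map (cokernel.π f₁)).app A₂) ((F.map (cokernel.π f₁)).naturality f₂))

end Bifunctor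

/-- For a bifunctor `F` between abelian categories that is additive and right exact in
each variable, the cokernel of the pushout product
`□_F(f₁, f₂) : F(B₁, A₂) ⊔_{F(A₁, A₂)} F(A₁, B₂) → F(B₁, B₂)`
is isomorphic to `F(coker f₁, coker f₂)`. -/
theorem cokernel_of_pushout_product
    {A₁ : Type u₁} [Category.{v₁} A₁] [Abelian A₁]
    {A₂ : Type u₂} [Category.{v₂} A₂] [Abelian A₂]
    {A₀ : Type u₀} [Category.{v₀} A₀] [Abelian A₀]
    (F : A₁ ⥤ A₂ ⥤ A₀)
    [∀ X₁ : A₁, (F.obj X₁).Additive] [∀ X₂ : A₂, (F.flip.obj X₂).Additive]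
    [∀ X₁ : A₁, PreservesFiniteColimits (F.obj X₁)]
    [∀ X₂ : A₂, PreservesFiniteColimits (F.flip.obj X₂)]
    {A₁' B₁ : A₁} {A₂' B₂ : A₂} (f₁ : A₁' ⟶ B₁) (f₂ : A₂' ⟶ B₂) :
    Nonempty (cokernel (pushout.desc ((F.map f₁).app B₂) ((F.obj B₁).map f₂)
        ((F.map f₁).naturality f₂)) ≅ (F.obj (cokernel f₁)).obj (cokernel f₂)) :=
  ⟨IsColimit.coconePointUniqueUpToIso (cokernelIsCokernel _) (isCokernelPushoutProduct F f₁ f₂)⟩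
end
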